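/- Consider the window obstacle model on [−L/2, L/2] with intensity λ > 0 and rate μ > 0: N is a Poisson random variable with mean λL; (Y_j)_{j≥1} are i.i.d. uniform on [−L/2, L/2]; (V_j)_{j≥1} and (W_j)_{j≥1} are i.i.d. exponential with rate μ; and N, (Y_j), (V_j), (W_j) are mutually independent; obstacle j is the segment [Y_j − V_j, Y_j + W_j]. Let n ≥ 2 and x̂₁ < … < x̂ₙ be real numbers, and define g : ℝ → ℝ by g(y) = 1 − e^{−μ(x̂₁ − y)} for y ≤ x̂₁; g(y) = (1 − e^{−μ(y − x̂_{k−1})})(1 − e^{−μ(x̂_k − y)}) for x̂_{k−1} < y < x̂_k (k = 2, …, n); and g(y) = 1 − e^{−μ(y − x̂ₙ)} for y ≥ x̂ₙ. Then the probability that no obstacle j ≤ N covers any of the points x̂₁, …, x̂ₙ equals exp(−λ ∫_{−L/2}^{L/2} (1 − g(y)) dy). -/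

import Mathlib

/-!
Split the event according to the value of `N`. Given `N = m`, the first `m` obstacles are
independent of `N` and of each other, and each covers none of the points with the same
probability `q`, so the event has probability `∑ₘ P(N = m) qᵐ = exp (λL (q - 1))`, the generating
function of the Poisson law. By Fubini, `q` is the average over the uniform anchor `y` of the
probability that the exponential extents `V, W` keep `[y - V, y + W]` strictly between the two
points adjacent to `y`; this product of exponential tails is `g y` for every `y` other than the
points themselves, so `λL (1 - q) = λ ∫ (1 - g)`.
-/

open MeasureTheory ProbabilityTheory

/-- Codomain family for the joint family consisting of the Poisson count `N`
(index `none`) and the real random variables `Y j`, `V j`, `W j` (indices `some (j, 0)`,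
`some (j, 1)`, `some (j, 2)`). -/
def WindowObstacleFam : Option (ℕ × Fin 3) → Type
  | none => ℕ
  | some _ => ℝ

instance : ∀ i, MeasurableSpace (WindowObstacleFam i)
  | none => inferInstanceAs (MeasurableSpace ℕ)
  | some _ => inferInstanceAs (MeasurableSpace ℝ)

/-- The joint family `{N, Y 0, V 0, W 0, Y 1, V 1, W 1, …}`. -/
def windowObstacleFun {Ω : Type*} (N : Ω → ℕ) (Y V W : ℕ → Ω → ℝ) :
    ∀ i : Option (ℕ × Fin 3), Ω → WindowObstacleFam i
  | none => N
  | some (j, k) => ![Y j, V j, W j] k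

open scoped NNReal ENNReal

namespace ProbabilityTheory

lemma hasSum_poissonMeasure_real_mul_pow (r : ℝ≥0) (q : ℝ) :
    HasSum (fun m => Po(r).real {m} * q ^ m) (Real.exp (r * (q - 1))) := by
  have hseries : HasSum (fun m : ℕ => Real.exp (-r) * ((r * q) ^ m / m.factorial))
      (Real.exp (-r) * Real.exp (r * q)) := by
    rw [Real.exp_eq_exp_ℝ]
    exact (NormedSpace.expSeries_div_hasSum_exp ((r : ℝ) * q)).mul_left _
  convert hseries using 1
  · ext m
    rw [poissonMeasure_real_singleton, mul_pow]
    ring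
  · rw [← Real.exp_add]
    ring_nf

variable {Ω : Type*} [MeasurableSpace Ω] {P : Measure Ω}

lemma measure_forall_lt_eq_exp_of_poisson {N : Ω → ℕ} {A : ℕ → Set Ω} {r : ℝ≥0} {q : ℝ}
    (hN : Measurable N) (hA : ∀ j, MeasurableSet (A j)) (hlaw : P.map N = poissonMeasure r)
    (hfactor : ∀ m, P (N ⁻¹' {m} ∩ ⋂ j ∈ Finset.range m, A j)
      = P (N ⁻¹' {m}) * ∏ j ∈ Finset.range m, P (A j))
    (hq0 : 0 ≤ q) (hq : ∀ j, P (A j) = ENNReal.ofReal q) :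
    P {ω | ∀ j < N ω, ω ∈ A j} = ENNReal.ofReal (Real.exp (r * (q - 1))) := by
  have hsplit : {ω | ∀ j < N ω, ω ∈ A j} = ⋃ m, N ⁻¹' {m} ∩ ⋂ j ∈ Finset.range m, A j := by
    ext ω
    simp only [Set.mem_ofPred_eq, Set.mem_iUnion, Set.mem_inter_iff, Set.mem_preimage,
      Set.mem_singleton_iff, Set.mem_iInter, Finset.mem_range]
    exact ⟨fun h => ⟨N ω, rfl, h⟩, fun ⟨m, hm, h⟩ => hm ▸ h⟩
  have hterm : ∀ m, P (N ⁻¹' {m} ∩ ⋂ j ∈ Finset.range m, A j)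
      = ENNReal.ofReal (Po(r).real {m} * q ^ m) := by
    intro m
    rw [hfactor, ← Measure.map_apply hN (measurableSet_singleton m), hlaw,
      ← ofReal_measureReal, Finset.prod_congr rfl fun j _ => hq j, Finset.prod_const,
      Finset.card_range, ← ENNReal.ofReal_pow hq0, ENNReal.ofReal_mul measureReal_nonneg]
  have hdisj : Pairwise (Function.onFun Disjoint
      fun m => N ⁻¹' {m} ∩ ⋂ j ∈ Finset.range m, A j) := fun m m' hmm' =>
    ((Set.disjoint_singleton.2 hmm').preimage N).mono Set.inter_subset_left
      Set.inter_subset_left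
  rw [hsplit, measure_iUnion hdisj fun m => (hN (measurableSet_singleton m)).inter
      (.biInter (Finset.range m).countable_toSet fun j _ => hA j), tsum_congr hterm,
    ← ENNReal.ofReal_tsum_of_nonneg (fun m => mul_nonneg measureReal_nonneg (pow_nonneg hq0 m))
      (hasSum_poissonMeasure_real_mul_pow r q).summable,
    (hasSum_poissonMeasure_real_mul_pow r q).tsum_eq]

lemma measure_inter_biInter_range_eq_mul_prod {ι : Type*} {m : ι → MeasurableSpace Ω}
    (hle : ∀ i, m i ≤ ‹MeasurableSpace Ω›) (hI : iIndep m P) {S : Set ι} {G : ℕ → Set ι}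
    (hSG : ∀ j, Disjoint S (G j)) (hG : Pairwise (Function.onFun Disjoint G)) {B : Set Ω}
    (hB : MeasurableSet[⨆ i ∈ S, m i] B) {A : ℕ → Set Ω}
    (hA : ∀ j, MeasurableSet[⨆ i ∈ G j, m i] (A j)) (k : ℕ) :
    P (B ∩ ⋂ j ∈ Finset.range k, A j) = P B * ∏ j ∈ Finset.range k, P (A j) := by
  induction k with
  | zero => simp
  | succ k ih =>
    set T : Set ι := S ∪ ⋃ j < k, G j
    have hTG : Disjoint T (G k) := Set.disjoint_union_left.2
      ⟨hSG k, Set.disjoint_iUnion₂_left.2 fun j hj => hG hj.ne⟩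
    have hsup : ∀ {U : Set ι}, U ⊆ T → ⨆ i ∈ U, m i ≤ ⨆ i ∈ T, m i := fun hU =>
      iSup₂_le fun i hi => le_biSup m (hU hi)
    have hmeas : MeasurableSet[⨆ i ∈ T, m i] (B ∩ ⋂ j ∈ Finset.range k, A j) :=
      (hsup Set.subset_union_left _ hB).inter <| .biInter (Finset.range k).countable_toSet
        fun j hj => hsup (Set.subset_union_of_subset_right
          (Set.subset_iUnion₂ (s := fun j (_ : j < k) => G j) j (Finset.mem_range.1 hj)) _) _ (hA j)
    rw [Finset.range_add_one, Finset.set_biInter_insert, Set.inter_left_comm, Set.inter_comm,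
      (Indep_iff _ _ _).1 (indep_iSup_of_disjoint hle hI hTG) _ _ hmeas (hA k), ih,
      Finset.prod_insert Finset.notMem_range_self]
    ring

lemma map_prodMk_prodMk_eq_prod [IsFiniteMeasure P] {α β γ : Type*} [MeasurableSpace α]
    [MeasurableSpace β] [MeasurableSpace γ] {X : Ω → α} {Y : Ω → β} {Z : Ω → γ}
    (hX : Measurable X) (hY : Measurable Y) (hZ : Measurable Z)
    (hXYZ : IndepFun X (fun ω => (Y ω, Z ω)) P) (hYZ : IndepFun Y Z P) :
    P.map (fun ω => (X ω, Y ω, Z ω)) = (P.map X).prod ((P.map Y).prod (P.map Z)) := by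
  rw [(indepFun_iff_map_prod_eq_prod_map_map hX.aemeasurable
      (hY.prodMk hZ).aemeasurable).1 hXYZ,
    (indepFun_iff_map_prod_eq_prod_map_map hY.aemeasurable hZ.aemeasurable).1 hYZ]

variable {μ : ℝ}

instance : SFinite (expMeasure μ) :=
  inferInstanceAs (SFinite (volume.withDensity _))

instance : NullSingletonClass (expMeasure μ) :=
  inferInstanceAs (NullSingletonClass (volume.withDensity _))

lemma measureReal_expMeasure_Iio (hμ : 0 < μ) {c : ℝ} (hc : 0 ≤ c) :
    (expMeasure μ).real (Set.Iio c) = 1 - Real.exp (-(μ * c)) := by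
  have := isProbabilityMeasure_expMeasure hμ
  rw [measureReal_def, measure_congr Iio_ae_eq_Iic, ← measureReal_def, ← cdf_eq_real,
    cdf_expMeasure_eq hμ, if_pos hc]

lemma ae_nonneg_expMeasure (hμ : 0 < μ) : ∀ᵐ x ∂expMeasure μ, 0 ≤ x := by
  have := isProbabilityMeasure_expMeasure hμ
  rw [ae_iff, ← measureReal_eq_zero_iff]
  simp_rw [not_le]
  rw [Set.Iio_def, measureReal_expMeasure_Iio hμ le_rfl, mul_zero, neg_zero, Real.exp_zero,
    sub_self]

end ProbabilityTheory

section Obstacles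

open Set

/-- The triple `(y, v, w)` encodes the obstacle `[y - v, y + w]`. -/
def nonBlockingObstacles (n : ℕ) (xh : ℕ → ℝ) : Set (ℝ × ℝ × ℝ) :=
  {q | ∀ i < n, ¬ (q.1 - q.2.1 ≤ xh i ∧ xh i ≤ q.1 + q.2.2)}

variable {n : ℕ} {xh : ℕ → ℝ} {y v w : ℝ}

lemma measurableSet_nonBlockingObstacles : MeasurableSet (nonBlockingObstacles n xh) := by
  simp only [nonBlockingObstacles, ofPred_forall]
  exact .iInter fun i => .iInter fun _ =>
    ((measurableSet_le (f := fun q : ℝ × ℝ × ℝ => q.1 - q.2.1) (by fun_prop) measurable_const).inter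
      (measurableSet_le (g := fun q : ℝ × ℝ × ℝ => q.1 + q.2.2) measurable_const
        (by fun_prop))).compl

lemma mk_mem_nonBlockingObstacles_iff_of_le_head (hmono : MonotoneOn xh (Iio n)) (hn : 0 < n)
    (hv : 0 ≤ v) (hy : y ≤ xh 0) : (y, v, w) ∈ nonBlockingObstacles n xh ↔ w < xh 0 - y := by
  refine ⟨fun h => ?_, fun h i hi hcov => ?_⟩
  · by_contra! hw
    exact h 0 hn ⟨by linarith, by linarith⟩
  · have := hmono (mem_Iio.2 hn) (mem_Iio.2 hi) i.zero_le
    exact absurd hcov.2 (by simp only; linarith)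

lemma mk_mem_nonBlockingObstacles_iff_of_last_le (hmono : MonotoneOn xh (Iio n)) (hn : 0 < n)
    (hw : 0 ≤ w) (hy : xh (n - 1) ≤ y) :
    (y, v, w) ∈ nonBlockingObstacles n xh ↔ v < y - xh (n - 1) := by
  refine ⟨fun h => ?_, fun h i hi hcov => ?_⟩
  · by_contra! hv
    exact h (n - 1) (by omega) ⟨by simp only; linarith, by simp only; linarith⟩
  · have := hmono (mem_Iio.2 hi) (mem_Iio.2 (by omega : n - 1 < n)) (by omega : i ≤ n - 1)
    exact absurd hcov.1 (by simp only; linarith)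

lemma mk_mem_nonBlockingObstacles_iff_of_mem_Ioo (hmono : MonotoneOn xh (Iio n)) {k : ℕ}
    (hk : k + 1 < n) (hv : 0 ≤ v) (hw : 0 ≤ w) (hy : y ∈ Ioo (xh k) (xh (k + 1))) :
    (y, v, w) ∈ nonBlockingObstacles n xh ↔ v < y - xh k ∧ w < xh (k + 1) - y := by
  refine ⟨fun h => ⟨?_, ?_⟩, fun ⟨hvk, hwk⟩ i hi hcov => ?_⟩
  · by_contra! hv'
    exact h k (by omega) ⟨by simp only; linarith, by simp only; linarith [hy.1]⟩
  · by_contra! hw'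
    exact h (k + 1) hk ⟨by simp only; linarith [hy.2], by simp only; linarith⟩
  · rcases Nat.lt_or_ge k i with hki | hik
    · have := hmono (mem_Iio.2 hk) (mem_Iio.2 hi) hki
      exact absurd hcov.2 (by simp only; linarith)
    · have := hmono (mem_Iio.2 hi) (mem_Iio.2 (by omega : k < n)) hik
      exact absurd hcov.1 (by simp only; linarith)

lemma le_head_or_last_le_or_exists_mem_Ioo (hn : 0 < n) (hy : y ∉ xh '' Iio n) :
    y ≤ xh 0 ∨ xh (n - 1) ≤ y ∨ ∃ k, k + 1 < n ∧ y ∈ Ioo (xh k) (xh (k + 1)) := by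
  rcases le_or_gt y (xh 0) with hhead | hhead
  · exact Or.inl hhead
  rcases le_or_gt (xh (n - 1)) y with hlast | hlast
  · exact Or.inr (Or.inl hlast)
  have hex : ∃ k, y < xh k := ⟨n - 1, hlast⟩
  obtain ⟨k, hk⟩ : ∃ k, Nat.find hex = k + 1 :=
    Nat.exists_eq_succ_of_ne_zero fun h => (h ▸ Nat.find_spec hex).not_gt hhead
  have hkn : k + 1 < n := hk ▸ (Nat.find_le hlast).trans_lt (by omega)
  have hle : xh k ≤ y := not_lt.1 (Nat.find_min hex (by omega))
  exact Or.inr <| Or.inr ⟨k, hkn,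
    lt_of_le_of_ne hle fun h => hy ⟨k, mem_Iio.2 (by omega), h⟩, hk ▸ Nat.find_spec hex⟩

end Obstacles

section NonBlockingProbability

open Set ProbabilityTheory

variable {μ : ℝ} {n : ℕ} {xh : ℕ → ℝ} {y : ℝ}

lemma measureReal_expMeasure_prod_congr (hμ : 0 < μ) {s t : Set (ℝ × ℝ)}
    (h : ∀ v w, 0 ≤ v → 0 ≤ w → ((v, w) ∈ s ↔ (v, w) ∈ t)) :
    ((expMeasure μ).prod (expMeasure μ)).real s = ((expMeasure μ).prod (expMeasure μ)).real t := by
  have hnonneg : ∀ᵐ p ∂(expMeasure μ).prod (expMeasure μ), 0 ≤ p.1 ∧ 0 ≤ p.2 :=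
    (Measure.quasiMeasurePreserving_fst.ae (ae_nonneg_expMeasure hμ)).and
      (Measure.quasiMeasurePreserving_snd.ae (ae_nonneg_expMeasure hμ))
  refine measureReal_congr ?_
  filter_upwards [hnonneg] with p hp
  exact propext (h p.1 p.2 hp.1 hp.2)

variable (hμ : 0 < μ) (hmono : MonotoneOn xh (Iio n))
include hμ hmono

lemma measureReal_slice_nonBlockingObstacles_of_le_head (hn : 0 < n) (hy : y ≤ xh 0) :
    ((expMeasure μ).prod (expMeasure μ)).real (Prod.mk y ⁻¹' nonBlockingObstacles n xh)
      = 1 - Real.exp (-(μ * (xh 0 - y))) := by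
  have := isProbabilityMeasure_expMeasure hμ
  rw [measureReal_expMeasure_prod_congr hμ (t := univ ×ˢ Iio (xh 0 - y)) fun v w hv _ =>
      (mk_mem_nonBlockingObstacles_iff_of_le_head hmono hn hv hy).trans (by simp),
    measureReal_prod_prod, probReal_univ, one_mul, measureReal_expMeasure_Iio hμ (by linarith)]

lemma measureReal_slice_nonBlockingObstacles_of_last_le (hn : 0 < n) (hy : xh (n - 1) ≤ y) :
    ((expMeasure μ).prod (expMeasure μ)).real (Prod.mk y ⁻¹' nonBlockingObstacles n xh)
      = 1 - Real.exp (-(μ * (y - xh (n - 1)))) := by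
  have := isProbabilityMeasure_expMeasure hμ
  rw [measureReal_expMeasure_prod_congr hμ (t := Iio (y - xh (n - 1)) ×ˢ univ) fun v w _ hw =>
      (mk_mem_nonBlockingObstacles_iff_of_last_le hmono hn hw hy).trans (by simp),
    measureReal_prod_prod, probReal_univ, mul_one, measureReal_expMeasure_Iio hμ (by linarith)]

lemma measureReal_slice_nonBlockingObstacles_of_mem_Ioo {k : ℕ} (hk : k + 1 < n)
    (hy : y ∈ Ioo (xh k) (xh (k + 1))) :
    ((expMeasure μ).prod (expMeasure μ)).real (Prod.mk y ⁻¹' nonBlockingObstacles n xh)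
      = (1 - Real.exp (-(μ * (y - xh k)))) * (1 - Real.exp (-(μ * (xh (k + 1) - y)))) := by
  rw [measureReal_expMeasure_prod_congr hμ (t := Iio (y - xh k) ×ˢ Iio (xh (k + 1) - y))
      fun v w hv hw => (mk_mem_nonBlockingObstacles_iff_of_mem_Ioo hmono hk hv hw hy).trans
        (by simp),
    measureReal_prod_prod, measureReal_expMeasure_Iio hμ (by linarith [hy.1]),
    measureReal_expMeasure_Iio hμ (by linarith [hy.2])]

lemma eq_measureReal_slice_nonBlockingObstacles {g : ℝ → ℝ} (hn : 0 < n)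
    (hg1 : ∀ y, y ≤ xh 0 → g y = 1 - Real.exp (-(μ * (xh 0 - y))))
    (hg2 : ∀ k, 1 ≤ k → k < n → ∀ y, xh (k - 1) < y → y < xh k →
        g y = (1 - Real.exp (-(μ * (y - xh (k - 1))))) * (1 - Real.exp (-(μ * (xh k - y)))))
    (hg3 : ∀ y, xh (n - 1) ≤ y → g y = 1 - Real.exp (-(μ * (y - xh (n - 1)))))
    (hy : y ∉ xh '' Iio n) :
    g y
      = ((expMeasure μ).prod (expMeasure μ)).real (Prod.mk y ⁻¹' nonBlockingObstacles n xh) := by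
  rcases le_head_or_last_le_or_exists_mem_Ioo hn hy with hhead | hlast | ⟨k, hk, hyk⟩
  · rw [hg1 y hhead, measureReal_slice_nonBlockingObstacles_of_le_head hμ hmono hn hhead]
  · rw [hg3 y hlast, measureReal_slice_nonBlockingObstacles_of_last_le hμ hmono hn hlast]
  · rw [measureReal_slice_nonBlockingObstacles_of_mem_Ioo hμ hmono hk hyk]
    simpa only [Nat.add_sub_cancel] using hg2 (k + 1) le_add_self hk y hyk.1 hyk.2

end NonBlockingProbability

section ProductMeasure

open Set

variable {α β : Type*} [MeasurableSpace α] [MeasurableSpace β] {μ : Measure α} {ν : Measure β}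
  [IsFiniteMeasure ν] {S : Set (α × β)}

lemma integrable_measureReal_prodMk_left [IsFiniteMeasure μ] (hS : MeasurableSet S) :
    Integrable (fun x => ν.real (Prod.mk x ⁻¹' S)) μ :=
  .of_bound (measurable_measure_prodMk_left hS).ennreal_toReal.aestronglyMeasurable (ν.real univ)
    (ae_of_all _ fun _ => by
      rw [Real.norm_of_nonneg measureReal_nonneg]
      exact measureReal_mono (subset_univ _))

lemma measure_prod_eq_ofReal_integral [IsFiniteMeasure μ] (hS : MeasurableSet S) :
    μ.prod ν S = ENNReal.ofReal (∫ x, ν.real (Prod.mk x ⁻¹' S) ∂μ) := by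
  rw [Measure.prod_apply hS, ofReal_integral_eq_lintegral_ofReal
    (integrable_measureReal_prodMk_left hS) (ae_of_all _ fun _ => measureReal_nonneg)]
  exact lintegral_congr fun x => (ofReal_measureReal (measure_ne_top ν _)).symm

end ProductMeasure

lemma intervalIntegral_one_sub_eq_mul_one_sub_integral {L : ℝ} (hL : 0 < L) {g h : ℝ → ℝ}
    (hgh : g =ᵐ[volume] h) (hh : IntegrableOn h (Set.Icc (-(L / 2)) (L / 2))) :
    ∫ y in -(L / 2)..(L / 2), (1 - g y)
      = L * (1 - ∫ y, h y ∂((ENNReal.ofReal L)⁻¹ •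
          volume.restrict (Set.Icc (-(L / 2)) (L / 2)))) := by
  have hle : -(L / 2) ≤ L / 2 := by linarith
  rw [intervalIntegral.integral_congr_ae (hgh.mono fun y hy _ => by rw [hy]),
    intervalIntegral.integral_sub intervalIntegrable_const
      ((intervalIntegrable_iff_integrableOn_Icc_of_le hle).2 hh),
    intervalIntegral.integral_const, intervalIntegral.integral_of_le hle,
    ← integral_Icc_eq_integral_Ioc, integral_smul_measure, ENNReal.toReal_inv,
    ENNReal.toReal_ofReal hL.le, smul_eq_mul, smul_eq_mul]
  field_simp
  ring

section WindowObstacleModel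

open Set

variable {Ω : Type*} [MeasurableSpace Ω] {P : Measure Ω} {N : Ω → ℕ} {Y V W : ℕ → Ω → ℝ}

lemma measurable_windowObstacleFun (hN : Measurable N) (hY : ∀ j, Measurable (Y j))
    (hV : ∀ j, Measurable (V j)) (hW : ∀ j, Measurable (W j)) :
    ∀ i, Measurable (windowObstacleFun N Y V W i)
  | none => hN
  | some (j, 0) => hY j
  | some (j, 1) => hV j
  | some (j, 2) => hW j

def windowObstacle (Y V W : ℕ → Ω → ℝ) (j : ℕ) (ω : Ω) : ℝ × ℝ × ℝ := (Y j ω, V j ω, W j ω)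

lemma measurable_windowObstacle (hY : ∀ j, Measurable (Y j)) (hV : ∀ j, Measurable (V j))
    (hW : ∀ j, Measurable (W j)) (j : ℕ) : Measurable (windowObstacle Y V W j) :=
  (hY j).prodMk ((hV j).prodMk (hW j))

variable (hindep : iIndepFun (windowObstacleFun N Y V W) P)
  (hmeas : ∀ i, Measurable (windowObstacleFun N Y V W i))
include hindep hmeas

lemma map_windowObstacle [IsFiniteMeasure P] (j : ℕ) :
    P.map (windowObstacle Y V W j) = (P.map (Y j)).prod ((P.map (V j)).prod (P.map (W j))) :=
  map_prodMk_prodMk_eq_prod (hmeas (some (j, 0))) (hmeas (some (j, 1))) (hmeas (some (j, 2)))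
    (hindep.indepFun_prodMk hmeas (some (j, 1)) (some (j, 2)) (some (j, 0)) (by simp)
      (by simp)).symm
    (hindep.indepFun (i := some (j, 1)) (j := some (j, 2)) (by simp))

lemma measure_count_inter_windowObstacle_eq_mul_prod {S : Set (ℝ × ℝ × ℝ)}
    (hS : MeasurableSet S) (m : ℕ) :
    P (N ⁻¹' {m} ∩ ⋂ j ∈ Finset.range m, windowObstacle Y V W j ⁻¹' S)
      = P (N ⁻¹' {m}) * ∏ j ∈ Finset.range m, P (windowObstacle Y V W j ⁻¹' S) := by
  set σ : Option (ℕ × Fin 3) → MeasurableSpace Ω :=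
    fun i => MeasurableSpace.comap (windowObstacleFun N Y V W i) inferInstance
  set G : ℕ → Set (Option (ℕ × Fin 3)) := fun j => range fun c => some (j, c)
  have hcoord : ∀ j c, Measurable[⨆ i ∈ G j, σ i] (windowObstacleFun N Y V W (some (j, c))) :=
    fun j c => (comap_measurable _).mono (le_biSup σ ⟨c, rfl⟩) le_rfl
  refine measure_inter_biInter_range_eq_mul_prod (m := σ) (fun i => (hmeas i).comap_le) hindep
    (fun j => disjoint_singleton_left.2 (by simp [G])) (fun j j' hjj' => ?_)
    (le_biSup σ (mem_singleton none) _ ⟨{m}, measurableSet_singleton m, rfl⟩)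
    (fun j => ((hcoord j 0).prodMk ((hcoord j 1).prodMk (hcoord j 2))) hS) m
  exact disjoint_left.2 fun _ ⟨c, hc⟩ ⟨c', hc'⟩ =>
    hjj' (congrArg Prod.fst (Option.some.inj (hc.trans hc'.symm)))

end WindowObstacleModel

/-- Window obstacle model on `[−L/2, L/2]` with intensity `λ` and rate `μ`.
Let `n ≥ 2`, `x̂ 0 < … < x̂ (n−1)`, and let `g` be the piecewise `n`-point non-blocking
probability function. Then the probability that no obstacle `j < N` covers any of the points
`x̂ 0, …, x̂ (n−1)` equals `exp(−λ ∫_{−L/2}^{L/2} (1 − g(y)) dy)`. -/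
theorem window_LOS_prob_n_points
    {Ω : Type*} [MeasurableSpace Ω] (P : Measure Ω) [IsProbabilityMeasure P]
    (lam μ L : ℝ) (hlam : 0 < lam) (hμ : 0 < μ) (hL : 0 < L)
    (N : Ω → ℕ) (Y V W : ℕ → Ω → ℝ)
    (hNmeas : Measurable N) (hYmeas : ∀ j, Measurable (Y j))
    (hVmeas : ∀ j, Measurable (V j)) (hWmeas : ∀ j, Measurable (W j))
    (hN : Measure.map N P = poissonMeasure (lam * L).toNNReal)
    (hY : ∀ j, Measure.map (Y j) P
        = (ENNReal.ofReal L)⁻¹ • (volume.restrict (Set.Icc (-(L / 2)) (L / 2))))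
    (hV : ∀ j, Measure.map (V j) P = expMeasure μ)
    (hW : ∀ j, Measure.map (W j) P = expMeasure μ)
    (hindep : iIndepFun (windowObstacleFun N Y V W) P)
    (n : ℕ) (hn : 2 ≤ n) (xh : ℕ → ℝ)
    (hmono : ∀ i j, i < j → j < n → xh i < xh j)
    (g : ℝ → ℝ)
    (hg1 : ∀ y, y ≤ xh 0 → g y = 1 - Real.exp (-(μ * (xh 0 - y))))
    (hg2 : ∀ k, 1 ≤ k → k < n → ∀ y, xh (k - 1) < y → y < xh k →
        g y = (1 - Real.exp (-(μ * (y - xh (k - 1)))))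
              * (1 - Real.exp (-(μ * (xh k - y)))))
    (hg3 : ∀ y, xh (n - 1) ≤ y → g y = 1 - Real.exp (-(μ * (y - xh (n - 1))))) :
    P {ω | ∀ j < N ω, ∀ i < n,
          ¬ (Y j ω - V j ω ≤ xh i ∧ xh i ≤ Y j ω + W j ω)}
      = ENNReal.ofReal (Real.exp (-(lam * ∫ y in -(L / 2)..(L / 2), (1 - g y)))) := by
  have := isProbabilityMeasure_expMeasure hμ
  have hmeas := measurable_windowObstacleFun hNmeas hYmeas hVmeas hWmeas
  have hS := measurableSet_nonBlockingObstacles (n := n) (xh := xh)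
  set unif := (ENNReal.ofReal L)⁻¹ • volume.restrict (Set.Icc (-(L / 2)) (L / 2))
  have : IsFiniteMeasure unif :=
    Measure.smul_finite _ (ENNReal.inv_ne_top.2 (ENNReal.ofReal_pos.2 hL).ne')
  set p : ℝ → ℝ := fun y =>
    ((expMeasure μ).prod (expMeasure μ)).real (Prod.mk y ⁻¹' nonBlockingObstacles n xh)
  have hmonoOn : MonotoneOn xh (Set.Iio n) := fun i _ j hj hij =>
    hij.eq_or_lt.elim (fun h => h ▸ le_rfl) fun h => (hmono i j h hj).le
  have hgh : g =ᵐ[volume] p := by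
    filter_upwards [((Set.finite_Iio n).image xh).countable.ae_notMem volume] with y hy
    exact eq_measureReal_slice_nonBlockingObstacles hμ hmonoOn (by omega) hg1 hg2 hg3 hy
  have hobstacle : ∀ j, P (windowObstacle Y V W j ⁻¹' nonBlockingObstacles n xh)
      = ENNReal.ofReal (∫ y, p y ∂unif) := fun j => by
    rw [← Measure.map_apply (measurable_windowObstacle hYmeas hVmeas hWmeas j) hS,
      map_windowObstacle hindep hmeas, hY, hV, hW, measure_prod_eq_ofReal_integral hS]
  calc P {ω | ∀ j < N ω, ∀ i < n, ¬ (Y j ω - V j ω ≤ xh i ∧ xh i ≤ Y j ω + W j ω)}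
      = P {ω | ∀ j < N ω, ω ∈ windowObstacle Y V W j ⁻¹' nonBlockingObstacles n xh} := rfl
    _ = ENNReal.ofReal (Real.exp ((lam * L).toNNReal * (∫ y, p y ∂unif - 1))) :=
      measure_forall_lt_eq_exp_of_poisson hNmeas
        (fun j => (measurable_windowObstacle hYmeas hVmeas hWmeas j) hS) hN
        (measure_count_inter_windowObstacle_eq_mul_prod hindep hmeas hS)
        (integral_nonneg fun _ => measureReal_nonneg) hobstacle
    _ = _ := by
      rw [intervalIntegral_one_sub_eq_mul_one_sub_integral hL hgh
        (integrable_measureReal_prodMk_left hS), Real.coe_toNNReal _ (by positivity)]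
      congr 2
      ring
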